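/- arXiv:2003.11165 — 3 statements merged into one kernel-verified Lean document; each statement's English description precedes it below -/
import Mathlib

section
/- There exists a surjective group homomorphism φ from Γ⁺ onto the alternating group A₅ on five letters determined by φ(a) = (2 3)(4 5), φ(b) = (1 2)(3 5), and φ(c) = (1 2 3 4 5). -/
/-- The three generators `a`, `b`, `c` of the tetrahedral group `Γ⁺`. -/
inductive Gen : Type
  | a | b | c

open FreeGroup in
/-- The relations `a² = b² = c⁵ = (bc)² = (ca)³ = (ab)⁵ = 1` of `Γ⁺`. -/
def rels : Set (FreeGroup Gen) :=
  {of Gen.a ^ 2, of Gen.b ^ 2, of Gen.c ^ 5,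
    (of Gen.b * of Gen.c) ^ 2, (of Gen.c * of Gen.a) ^ 3, (of Gen.a * of Gen.b) ^ 5}

/-- `Γ⁺ = ⟨a, b, c | a² = b² = c⁵ = (bc)² = (ca)³ = (ab)⁵ = 1⟩`. -/
abbrev GammaPlus := PresentedGroup rels

/-- The permutation assigned to each generator. -/
def tgtPerm : Gen → Equiv.Perm (Fin 5)
  | .a => Equiv.swap 1 2 * Equiv.swap 3 4
  | .b => Equiv.swap 0 1 * Equiv.swap 2 4
  | .c => finRotate 5

lemma tgt_mem : ∀ g, tgtPerm g ∈ alternatingGroup (Fin 5) := by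
  intro g
  rw [Equiv.Perm.mem_alternatingGroup]
  cases g <;> decide

/-- The assignment of generators to elements of `A₅`. -/
def tgt : Gen → alternatingGroup (Fin 5) := fun g => ⟨tgtPerm g, tgt_mem g⟩

lemma tgt_rels : ∀ r ∈ rels, FreeGroup.lift tgt r = 1 := by
  intro r hr
  rcases hr with h | h | h | h | h | h <;> subst h <;>
    simp only [map_pow, map_mul, FreeGroup.lift_apply_of] <;>
    (apply Subtype.ext; simp only [SubmonoidClass.coe_pow, Subgroup.coe_mul,
      OneMemClass.coe_one, tgt]) <;> decide

/-- A subgroup of index two is normal. -/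
lemma normal_of_index_two {G : Type*} [Group G] (H : Subgroup G) (h : H.index = 2) :
    H.Normal := by
  constructor
  intro n hn g
  rw [mul_assoc, Subgroup.mul_mem_iff_of_index_two h,
    Subgroup.mul_mem_iff_of_index_two h, Subgroup.inv_mem_iff]
  tauto

lemma card_A5 : Nat.card (alternatingGroup (Fin 5)) = 60 := by
  have h := @two_mul_card_alternatingGroup (Fin 5) _ _ _
  rw [Fintype.card_perm, Fintype.card_fin, show Nat.factorial 5 = 120 by decide] at h
  rw [Nat.card_eq_fintype_card]
  omega

/-- There is a surjective homomorphism `φ : Γ⁺ → A₅` with `φ(a) = (2 3)(4 5)`,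
`φ(b) = (1 2)(3 5)` and `φ(c) = (1 2 3 4 5)` (with the five letters `1, ..., 5`
rendered as `0, ..., 4 : Fin 5`). -/
theorem exists_surjective_hom_to_A5 :
    ∃ φ : GammaPlus →* alternatingGroup (Fin 5),
      Function.Surjective φ ∧
      (φ (PresentedGroup.of Gen.a) : Equiv.Perm (Fin 5)) = Equiv.swap 1 2 * Equiv.swap 3 4 ∧
      (φ (PresentedGroup.of Gen.b) : Equiv.Perm (Fin 5)) = Equiv.swap 0 1 * Equiv.swap 2 4 ∧
      (φ (PresentedGroup.of Gen.c) : Equiv.Perm (Fin 5)) = finRotate 5 := by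
  refine ⟨PresentedGroup.toGroup tgt_rels, ?_, ?_, ?_, ?_⟩
  · set φ := PresentedGroup.toGroup tgt_rels with hφ
    rw [← MonoidHom.range_eq_top]
    set H := φ.range with hH
    have hmem : ∀ g : Gen, tgt g ∈ H := fun g =>
      ⟨PresentedGroup.of g, PresentedGroup.toGroup.of tgt_rels⟩
    haveI : Fact (Nat.Prime 5) := ⟨by norm_num⟩
    have h2 : orderOf (tgt Gen.a) = 2 := by
      rw [← Subgroup.orderOf_coe]; exact orderOf_eq_prime (by decide) (by decide)
    have h5 : orderOf (tgt Gen.c) = 5 := by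
      rw [← Subgroup.orderOf_coe]; exact orderOf_eq_prime (by decide) (by decide)
    have h3 : orderOf (tgt Gen.c * tgt Gen.a) = 3 := by
      rw [← Subgroup.orderOf_coe]; exact orderOf_eq_prime (by decide) (by decide)
    have d2 : 2 ∣ Nat.card H := by
      have := H.orderOf_dvd_natCard (hmem Gen.a); rwa [h2] at this
    have d5 : 5 ∣ Nat.card H := by
      have := H.orderOf_dvd_natCard (hmem Gen.c); rwa [h5] at this
    have d3 : 3 ∣ Nat.card H := by
      have := H.orderOf_dvd_natCard (mul_mem (hmem Gen.c) (hmem Gen.a))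
      rwa [h3] at this
    have d30 : 30 ∣ Nat.card H := by omega
    have hcmi : Nat.card H * H.index = 60 := by rw [Subgroup.card_mul_index, card_A5]
    obtain ⟨k, hk⟩ := d30
    have hk2 : k * H.index = 2 := by
      have : 30 * (k * H.index) = 30 * 2 := by rw [← mul_assoc, ← hk, hcmi]
      omega
    have hidx : H.index ∣ 2 := Dvd.intro_left k hk2
    rcases (Nat.dvd_prime Nat.prime_two).mp hidx with h1 | h1
    · exact Subgroup.index_eq_one.mp h1
    · exfalso
      have := normal_of_index_two H h1
      rcases this.eq_bot_or_eq_top with hb | ht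
      · rw [hb, Subgroup.index_bot, card_A5] at h1; omega
      · rw [ht, Subgroup.index_top] at h1; omega
  · exact congrArg _ (PresentedGroup.toGroup.of tgt_rels)
  · exact congrArg _ (PresentedGroup.toGroup.of tgt_rels)
  · exact congrArg _ (PresentedGroup.toGroup.of tgt_rels)
end

section
/- The group Γ⁺ is perfect: its commutator subgroup equals the whole group, equivalently its abelianization is the trivial group. -/
/-! Every homomorphism from `Γ⁺` to an abelian group is trivial, since there the relations collapse
one generator at a time: `(bc)² = b²c²` and `b² = 1` give `c² = 1`, which with `c⁵ = 1` forces
`c = 1`; then `(ca)³ = a³` against `a² = 1`, and `(ab)⁵ = b⁵` against `b² = 1`. Applied to the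
abelianization map, this says the commutator subgroup is everything. -/

theorem eq_one_of_gammaPlus_relations {A : Type*} [CommGroup A] {α β γ : A}
    (hα : α ^ 2 = 1) (hβ : β ^ 2 = 1) (hγ : γ ^ 5 = 1) (hβγ : (β * γ) ^ 2 = 1)
    (hγα : (γ * α) ^ 3 = 1) (hαβ : (α * β) ^ 5 = 1) : α = 1 ∧ β = 1 ∧ γ = 1 := by
  have hγ1 : γ = 1 := by
    rw [mul_pow, hβ, one_mul] at hβγ
    exact (pow_eq_one_iff_of_coprime (by norm_num)).mp ⟨hβγ, hγ⟩
  have hα1 : α = 1 := by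
    rw [mul_pow, hγ1, one_pow, one_mul] at hγα
    exact (pow_eq_one_iff_of_coprime (by norm_num)).mp ⟨hα, hγα⟩
  have hβ1 : β = 1 := by
    rw [mul_pow, hα1, one_pow, one_mul] at hαβ
    exact (pow_eq_one_iff_of_coprime (by norm_num)).mp ⟨hβ, hαβ⟩
  exact ⟨hα1, hβ1, hγ1⟩

theorem PresentedGroup.lift_of_eq_one_of_mem {α H : Type*} [Group H] {R : Set (FreeGroup α)}
    (φ : PresentedGroup R →* H) {r : FreeGroup α} (hr : r ∈ R) :
    FreeGroup.lift (fun x => φ (PresentedGroup.of x)) r = 1 := by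
  have hlift :
      FreeGroup.lift (fun x => φ (PresentedGroup.of x)) = φ.comp (PresentedGroup.mk R) :=
    FreeGroup.ext_hom _ _ fun _ => by simp [PresentedGroup.of]
  rw [hlift, MonoidHom.comp_apply, PresentedGroup.one_of_mem hr, map_one]

theorem Group.IsPerfect.subsingleton_abelianization (G : Type*) [Group G] [Group.IsPerfect G] :
    Subsingleton (Abelianization G) :=
  have : Group.IsPerfect (Abelianization G) :=
    Group.IsPerfect.ofSurjective (f := Abelianization.of) (QuotientGroup.mk'_surjective _)
  inferInstance

namespace GammaPlus

theorem monoidHom_to_commGroup_eq_one {A : Type*} [CommGroup A] (φ : GammaPlus →* A) :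
    φ = 1 := by
  have hrel := fun r (hr : r ∈ rels) => PresentedGroup.lift_of_eq_one_of_mem φ hr
  simp only [rels, Set.mem_insert_iff, Set.mem_singleton_iff, forall_eq_or_imp, forall_eq,
    map_pow, map_mul, FreeGroup.lift_apply_of] at hrel
  obtain ⟨ha, hb, hc⟩ := eq_one_of_gammaPlus_relations hrel.1 hrel.2.1 hrel.2.2.1 hrel.2.2.2.1
    hrel.2.2.2.2.1 hrel.2.2.2.2.2
  ext x
  cases x <;> assumption

instance : Group.IsPerfect GammaPlus where
  commutator_eq_top := by
    rw [← Abelianization.ker_of, monoidHom_to_commGroup_eq_one Abelianization.of,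
      MonoidHom.ker_one]

end GammaPlus

/-- `Γ⁺` is a perfect group: its commutator subgroup is everything,
equivalently its abelianization is trivial. -/
theorem gammaPlus_commutator_eq_top :
    commutator GammaPlus = ⊤ ∧ Subsingleton (Abelianization GammaPlus) :=
  ⟨Group.IsPerfect.commutator_eq_top, Group.IsPerfect.subsingleton_abelianization GammaPlus⟩
end

section
/- The group Γ⁺ equals its subgroup generated by squares: the subgroup of Γ⁺ generated by the set {g² : g ∈ Γ⁺} is all of Γ⁺. Equivalently, every group homomorphism from Γ⁺ to ℤ/2ℤ is trivial. -/
/-- `Γ⁺` is generated by squares: the subgroup generated by `{g² : g ∈ Γ⁺}` is all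
of `Γ⁺`; equivalently, every homomorphism `Γ⁺ → ℤ/2ℤ` is trivial. -/
theorem gammaPlus_eq_squares_subgroup :
    Subgroup.closure {x : GammaPlus | ∃ g : GammaPlus, g ^ 2 = x} = ⊤ ∧
      ∀ φ : GammaPlus →* Multiplicative (ZMod 2), φ = 1 := by
  set A : GammaPlus := PresentedGroup.of Gen.a with hA
  set B : GammaPlus := PresentedGroup.of Gen.b with hB
  set C : GammaPlus := PresentedGroup.of Gen.c with hC
  have hrel : ∀ r ∈ rels, PresentedGroup.mk rels r = 1 := by
    intro r hr
    exact (QuotientGroup.eq_one_iff r).mpr (Subgroup.subset_normalClosure hr)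
  have key : ∀ r ∈ rels, (PresentedGroup.mk rels) r = 1 := hrel
  have hmk : ∀ x : Gen, PresentedGroup.mk rels (FreeGroup.of x) = PresentedGroup.of x :=
    fun _ => rfl
  have ha2 : A ^ 2 = 1 := by
    have := key (FreeGroup.of Gen.a ^ 2) (by simp [rels])
    simpa [hmk] using this
  have hc5 : C ^ 5 = 1 := by
    have := key (FreeGroup.of Gen.c ^ 5) (by simp [rels])
    simpa [hmk] using this
  have hca3 : (C * A) ^ 3 = 1 := by
    have := key ((FreeGroup.of Gen.c * FreeGroup.of Gen.a) ^ 3) (by simp [rels])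
    simpa [hmk] using this
  have hab5 : (A * B) ^ 5 = 1 := by
    have := key ((FreeGroup.of Gen.a * FreeGroup.of Gen.b) ^ 5) (by simp [rels])
    simpa [hmk] using this
  set S : Subgroup GammaPlus :=
    Subgroup.closure {x : GammaPlus | ∃ g : GammaPlus, g ^ 2 = x} with hS
  have hsq : ∀ g : GammaPlus, g ^ 2 ∈ S := fun g =>
    Subgroup.subset_closure ⟨g, rfl⟩
  have hCmem : C ∈ S := by
    have : (C ^ 3) ^ 2 = C := by
      rw [← pow_mul]
      calc C ^ 6 = C ^ 5 * C := by rw [pow_succ]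
        _ = C := by rw [hc5, one_mul]
    exact this ▸ hsq (C ^ 3)
  have hCAmem : C * A ∈ S := by
    have : ((C * A) ^ 2) ^ 2 = C * A := by
      rw [← pow_mul]
      calc (C * A) ^ 4 = (C * A) ^ 3 * (C * A) := by rw [pow_succ]
        _ = C * A := by rw [hca3, one_mul]
    exact this ▸ hsq ((C * A) ^ 2)
  have hAmem : A ∈ S := by
    have : C⁻¹ * (C * A) = A := by group
    simpa [this] using S.mul_mem (S.inv_mem hCmem) hCAmem
  have hABmem : A * B ∈ S := by
    have : ((A * B) ^ 3) ^ 2 = A * B := by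
      rw [← pow_mul]
      calc (A * B) ^ 6 = (A * B) ^ 5 * (A * B) := by rw [pow_succ]
        _ = A * B := by rw [hab5, one_mul]
    exact this ▸ hsq ((A * B) ^ 3)
  have hBmem : B ∈ S := by
    have : A⁻¹ * (A * B) = B := by group
    simpa [this] using S.mul_mem (S.inv_mem hAmem) hABmem
  have hStop : S = ⊤ := by
    rw [Subgroup.eq_top_iff']
    intro x
    refine PresentedGroup.generated_by rels S (fun j => ?_) x
    cases j
    · exact hAmem
    · exact hBmem
    · exact hCmem
  refine ⟨hStop, ?_⟩
  intro φ
  refine MonoidHom.ext fun x => ?_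
  have hx : x ∈ S := hStop ▸ Subgroup.mem_top x
  have : φ x = 1 := by
    refine Subgroup.closure_induction ?_ ?_ ?_ ?_ hx
    · rintro y ⟨g, rfl⟩
      have h2 : ∀ y : Multiplicative (ZMod 2), y ^ 2 = 1 := by decide
      simpa [map_pow] using h2 (φ g)
    · simp
    · intro y z _ _ hy hz
      simp [hy, hz]
    · intro y _ hy
      simp [hy]
  simpa using this
end
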